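/- Let B be a bicategory, let B be a separable Frobenius algebra on an object b, and let X : a → b be a left B-module with action ρ : B ⊗ X → X. Define σ := (1_B ⊗ ρ) ∘ ((Δ ∘ η) ⊗ 1_X) : X → B ⊗ X. Then ρ ∘ σ = 1_X and σ ∘ ρ = (μ ⊗ ρ) ∘ (1_B ⊗ (Δ ∘ η) ⊗ 1_X), the canonical idempotent on B ⊗ X whose image is B ⊗_B X (B regarded as a right module over itself via μ). Hence the left action ρ descends to an isomorphism B ⊗_B X ≅ X with inverse induced by σ. -/
import Mathlib


/-!
For a separable Frobenius algebra B and a left B-module X, the action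
descends to an isomorphism B ⊗_B X ≅ X.

Conventions: the paper's horizontal composite `F ⊗ G` (first `G`, then `F`) is
Mathlib's `G ≫ F`.  A left `B`-module `X : a → b` has its action `B ⊗ X → X`
given by `act : X ≫ B ⟶ X`, and `B ⊗ X` is `X ≫ B`.  All coherence
isomorphisms suppressed in the paper are inserted explicitly.
-/

open CategoryTheory Bicategory

universe w v u

/-- A Frobenius algebra on an object `b` of a bicategory. -/
structure Frob {C : Type u} [Bicategory.{w, v} C] (b : C) where
  A : b ⟶ b
  mul : A ≫ A ⟶ A
  one : 𝟙 b ⟶ A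
  comul : A ⟶ A ≫ A
  counit : A ⟶ 𝟙 b
  mul_assoc : (α_ A A A).hom ≫ A ◁ mul ≫ mul = mul ▷ A ≫ mul
  mul_one : (ρ_ A).inv ≫ A ◁ one ≫ mul = 𝟙 A
  one_mul : (λ_ A).inv ≫ one ▷ A ≫ mul = 𝟙 A
  comul_coassoc : comul ≫ A ◁ comul = comul ≫ comul ▷ A ≫ (α_ A A A).hom
  comul_counit : comul ≫ A ◁ counit ≫ (ρ_ A).hom = 𝟙 A
  counit_comul : comul ≫ counit ▷ A ≫ (λ_ A).hom = 𝟙 A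
  frob_left : A ◁ comul ≫ (α_ A A A).inv ≫ mul ▷ A = mul ≫ comul
  frob_right : comul ▷ A ≫ (α_ A A A).hom ≫ A ◁ mul = mul ≫ comul

variable {C : Type u} [Bicategory.{w, v} C]

/-- A left `B`-module structure on `X : a ⟶ b`. -/
def IsLeftModule {a b : C} (F : Frob b) (X : a ⟶ b) (act : X ≫ F.A ⟶ X) : Prop :=
  ((α_ X F.A F.A).hom ≫ X ◁ F.mul ≫ act = act ▷ F.A ≫ act) ∧
  ((ρ_ X).inv ≫ X ◁ F.one ≫ act = 𝟙 X)

/-- `σ := (1_B ⊗ ρ) ∘ ((Δ ∘ η) ⊗ 1_X) : X → B ⊗ X`. -/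
def sigmaMap {a b : C} (F : Frob b) (X : a ⟶ b) (act : X ≫ F.A ⟶ X) :
    X ⟶ X ≫ F.A :=
  (ρ_ X).inv ≫ X ◁ (F.one ≫ F.comul) ≫ (α_ X F.A F.A).inv ≫ act ▷ F.A

/-- The canonical idempotent `(μ ⊗ ρ) ∘ (1_B ⊗ (Δ ∘ η) ⊗ 1_X)` on `B ⊗ X`,
whose image is `B ⊗_B X` (`B` regarded as a right module over itself via `μ`). -/
def piB {a b : C} (F : Frob b) (X : a ⟶ b) (act : X ≫ F.A ⟶ X) :
    X ≫ F.A ⟶ X ≫ F.A :=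
  X ◁ (λ_ F.A).inv ≫ X ◁ ((F.one ≫ F.comul) ▷ F.A) ≫ X ◁ (α_ F.A F.A F.A).hom ≫
    (α_ X F.A (F.A ≫ F.A)).inv ≫ act ▷ (F.A ≫ F.A) ≫ X ◁ F.mul

theorem frobL1 {b : C} (F : Frob b) :
    (λ_ F.A).inv ≫ (F.one ≫ F.comul) ▷ F.A ≫ (α_ F.A F.A F.A).hom ≫ F.A ◁ F.mul
      = F.comul := by
  rw [comp_whiskerRight, Category.assoc, F.frob_right]
  slice_lhs 1 3 => rw [F.one_mul]
  simp

theorem frobL2 {b : C} (F : Frob b) :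
    (ρ_ F.A).inv ≫ F.A ◁ (F.one ≫ F.comul) ≫ (α_ F.A F.A F.A).inv ≫ F.mul ▷ F.A
      = F.comul := by
  rw [Bicategory.whiskerLeft_comp, Category.assoc, F.frob_left]
  slice_lhs 1 3 => rw [F.mul_one]
  simp

theorem piB_eq {a b : C} (F : Frob b) (X : a ⟶ b) (act : X ≫ F.A ⟶ X) :
    piB F X act = X ◁ F.comul ≫ (α_ X F.A F.A).inv ≫ act ▷ F.A := by
  unfold piB
  rw [← whisker_exchange]
  have h : X ◁ (λ_ F.A).inv ≫ X ◁ ((F.one ≫ F.comul) ▷ F.A) ≫ X ◁ (α_ F.A F.A F.A).hom ≫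
      (α_ X F.A (F.A ≫ F.A)).inv ≫ (X ≫ F.A) ◁ F.mul =
    X ◁ ((λ_ F.A).inv ≫ (F.one ≫ F.comul) ▷ F.A ≫ (α_ F.A F.A F.A).hom ≫ F.A ◁ F.mul) ≫
      (α_ X F.A F.A).inv := by
    bicategory
  calc X ◁ (λ_ F.A).inv ≫ X ◁ ((F.one ≫ F.comul) ▷ F.A) ≫ X ◁ (α_ F.A F.A F.A).hom ≫
      (α_ X F.A (F.A ≫ F.A)).inv ≫ (X ≫ F.A) ◁ F.mul ≫ act ▷ F.A
      = (X ◁ (λ_ F.A).inv ≫ X ◁ ((F.one ≫ F.comul) ▷ F.A) ≫ X ◁ (α_ F.A F.A F.A).hom ≫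
          (α_ X F.A (F.A ≫ F.A)).inv ≫ (X ≫ F.A) ◁ F.mul) ≫ act ▷ F.A := by
        simp only [Category.assoc]
    _ = (X ◁ ((λ_ F.A).inv ≫ (F.one ≫ F.comul) ▷ F.A ≫ (α_ F.A F.A F.A).hom ≫ F.A ◁ F.mul) ≫
          (α_ X F.A F.A).inv) ≫ act ▷ F.A := by rw [h]
    _ = X ◁ F.comul ≫ (α_ X F.A F.A).inv ≫ act ▷ F.A := by
        rw [frobL1]; simp only [Category.assoc]

theorem act_sigma {a b : C} (F : Frob b) (X : a ⟶ b) (act : X ≫ F.A ⟶ X)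
    (hX : IsLeftModule F X act) :
    act ≫ sigmaMap F X act = X ◁ F.comul ≫ (α_ X F.A F.A).inv ≫ act ▷ F.A := by
  unfold sigmaMap
  rw [← Category.assoc, rightUnitor_inv_naturality]
  slice_lhs 2 3 => rw [← whisker_exchange]
  slice_lhs 3 4 => rw [associator_inv_naturality_left]
  slice_lhs 4 5 => rw [← comp_whiskerRight, ← hX.1]
  have h : (ρ_ (X ≫ F.A)).inv ≫ (X ≫ F.A) ◁ (F.one ≫ F.comul) ≫ (α_ (X ≫ F.A) F.A F.A).inv ≫
      (α_ X F.A F.A).hom ▷ F.A ≫ (X ◁ F.mul) ▷ F.A =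
    X ◁ ((ρ_ F.A).inv ≫ F.A ◁ (F.one ≫ F.comul) ≫ (α_ F.A F.A F.A).inv ≫ F.mul ▷ F.A) ≫
      (α_ X F.A F.A).inv := by
    bicategory
  calc (ρ_ (X ≫ F.A)).inv ≫ (X ≫ F.A) ◁ (F.one ≫ F.comul) ≫ (α_ (X ≫ F.A) F.A F.A).inv ≫
      ((α_ X F.A F.A).hom ≫ X ◁ F.mul ≫ act) ▷ F.A
      = ((ρ_ (X ≫ F.A)).inv ≫ (X ≫ F.A) ◁ (F.one ≫ F.comul) ≫ (α_ (X ≫ F.A) F.A F.A).inv ≫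
          (α_ X F.A F.A).hom ▷ F.A ≫ (X ◁ F.mul) ▷ F.A) ≫ act ▷ F.A := by
        simp only [comp_whiskerRight, Category.assoc]
    _ = (X ◁ ((ρ_ F.A).inv ≫ F.A ◁ (F.one ≫ F.comul) ≫ (α_ F.A F.A F.A).inv ≫ F.mul ▷ F.A) ≫
          (α_ X F.A F.A).inv) ≫ act ▷ F.A := by rw [h]
    _ = X ◁ F.comul ≫ (α_ X F.A F.A).inv ≫ act ▷ F.A := by
        rw [frobL2]; simp only [Category.assoc]

/-- For a separable Frobenius algebra `B` and a left
`B`-module `X` with action `ρ`, the map `σ` satisfies `ρ ∘ σ = 1_X` and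
`σ ∘ ρ = (μ ⊗ ρ) ∘ (1_B ⊗ (Δ ∘ η) ⊗ 1_X)`, the canonical idempotent on
`B ⊗ X` with image `B ⊗_B X`; hence through any splitting of this idempotent
the action `ρ` descends to an isomorphism `B ⊗_B X ≅ X` with inverse induced
by `σ`. -/
theorem action_descends_to_iso {a b : C} (F : Frob b)
    (hsep : F.comul ≫ F.mul = 𝟙 F.A)
    (X : a ⟶ b) (act : X ≫ F.A ⟶ X) (hX : IsLeftModule F X act) :
    (sigmaMap F X act ≫ act = 𝟙 X) ∧
    (act ≫ sigmaMap F X act = piB F X act) ∧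
    (∀ (T : a ⟶ b) (ϑ : X ≫ F.A ⟶ T) (ξ : T ⟶ X ≫ F.A),
      ξ ≫ ϑ = 𝟙 T → ϑ ≫ ξ = piB F X act →
        ((ξ ≫ act) ≫ sigmaMap F X act ≫ ϑ = 𝟙 T ∧
         (sigmaMap F X act ≫ ϑ) ≫ ξ ≫ act = 𝟙 X)) := by
  have h1 : sigmaMap F X act ≫ act = 𝟙 X := by
    unfold sigmaMap
    simp only [Category.assoc]
    rw [← hX.1, Iso.inv_hom_id_assoc, Bicategory.whiskerLeft_comp, Category.assoc]
    rw [← Category.assoc (X ◁ F.comul), ← Bicategory.whiskerLeft_comp, hsep,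
      Bicategory.whiskerLeft_id, Category.id_comp]
    exact hX.2
  have h2 : act ≫ sigmaMap F X act = piB F X act := by
    rw [act_sigma F X act hX, piB_eq]
  refine ⟨h1, h2, ?_⟩
  intro T ϑ ξ hξϑ hϑξ
  constructor
  · rw [Category.assoc, ← Category.assoc act, h2, ← hϑξ]
    rw [← Category.assoc, ← Category.assoc, hξϑ, Category.id_comp, hξϑ]
  · have : sigmaMap F X act ≫ ϑ ≫ ξ = sigmaMap F X act ≫ act ≫ sigmaMap F X act := by
      rw [hϑξ, h2]
    calc (sigmaMap F X act ≫ ϑ) ≫ ξ ≫ act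
        = (sigmaMap F X act ≫ ϑ ≫ ξ) ≫ act := by simp only [Category.assoc]
      _ = (sigmaMap F X act ≫ act ≫ sigmaMap F X act) ≫ act := by rw [this]
      _ = 𝟙 X := by
          simp only [← Category.assoc]
          rw [h1, Category.id_comp, h1]
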